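/- Coverage under a bounded probability of false alarm: let C := {t ∈ ℕ : t ≤ τ, M_t < 2/α} for some α ∈ (0,1). If the detection procedure controls the probability of false alarm at level δ ∈ (0,1), i.e., P_{F₀,∞}(τ < ∞) ≤ δ for every F₀ ∈ 𝒫₀, then for every F₀ ∈ 𝒫₀, F₁ ∈ 𝒫₁, and T ∈ ℕ: P_{F₀,T,F₁}(T ∈ C) ≥ 1 − α − δ; and moreover, if P_{F₀,∞}(τ ≥ T) > 0 for all F₀ ∈ 𝒫₀, then P_{F₀,T,F₁}(T ∈ C | τ ≥ T) ≥ 1 − α/(1 − δ). -/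

import Mathlib

open MeasureTheory ProbabilityTheory Filter Set
open scoped ENNReal NNReal

namespace SeqChange

variable {𝒳 : Type*} [MeasurableSpace 𝒳]

/-- The σ-algebra on the sequence space generated by the coordinates with indices in `s`. -/
def coordSigma (𝒳 : Type*) [MeasurableSpace 𝒳] (s : Set ℕ) : MeasurableSpace (ℕ → 𝒳) :=
  ⨆ i ∈ s, MeasurableSpace.comap (fun ω : ℕ → 𝒳 => ω i) inferInstance

/-- The natural filtration `σ(X₁, …, Xₙ)` of the observation sequence (observations are
indexed from 1; coordinate 0 is unused). -/
def natFilt (𝒳 : Type*) [MeasurableSpace 𝒳] (n : ℕ) : MeasurableSpace (ℕ → 𝒳) :=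
  coordSigma 𝒳 {i | 1 ≤ i ∧ i ≤ n}

/-- `τ` is a stopping time with respect to the natural filtration of the observation
sequence, taking values in `ℕ ∪ {∞}`. -/
def IsStoppingTimeSeq (τ : (ℕ → 𝒳) → ℕ∞) : Prop :=
  ∀ n : ℕ, MeasurableSet[natFilt 𝒳 n] {ω | τ ω ≤ (n : ℕ∞)}

/-- `P` is the joint law of a sequence of independent observations `X₁, X₂, …` with
`Xₙ ~ ν n` for every `n ≥ 1`: a probability measure whose finite-dimensional
distributions on the coordinates with indices `≥ 1` are the corresponding products. -/
def IsProductLaw (P : Measure (ℕ → 𝒳)) (ν : ℕ → Measure 𝒳) : Prop :=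
  IsProbabilityMeasure P ∧
    ∀ s : Finset ℕ, (∀ i ∈ s, 1 ≤ i) → ∀ A : ℕ → Set 𝒳, (∀ i, MeasurableSet (A i)) →
      P {ω | ∀ i ∈ s, ω i ∈ A i} = ∏ i ∈ s, ν i (A i)

/-- `P` is the law `P_{F₀,T,F₁}`: independent coordinates, `Xₙ ~ F₀` for `n < T` and
`Xₙ ~ F₁` for `n ≥ T`. -/
def IsChangeLaw (P : Measure (ℕ → 𝒳)) (F₀ F₁ : Measure 𝒳) (T : ℕ) : Prop :=
  IsProductLaw P (fun n => if n < T then F₀ else F₁)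

/-- `P` is the law `P_{F₀,∞}`: all coordinates i.i.d. `F₀` (no change ever occurs). -/
def IsNoChangeLaw (P : Measure (ℕ → 𝒳)) (F₀ : Measure 𝒳) : Prop :=
  IsProductLaw P (fun _ => F₀)

/-- Under `Q`, the coordinates with indices in `I` are i.i.d. with law `ν`. -/
def IsIIDOn (Q : Measure (ℕ → 𝒳)) (ν : Measure 𝒳) (I : Set ℕ) : Prop :=
  IsProbabilityMeasure Q ∧
    ∀ s : Finset ℕ, (↑s ⊆ I) → ∀ A : ℕ → Set 𝒳, (∀ i, MeasurableSet (A i)) →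
      Q {ω | ∀ i ∈ s, ω i ∈ A i} = ∏ i ∈ s, ν (A i)

/-- Forward filtration `σ(X_t, …, X_n)`. -/
def fwdFilt (𝒳 : Type*) [MeasurableSpace 𝒳] (t n : ℕ) : MeasurableSpace (ℕ → 𝒳) :=
  coordSigma 𝒳 {i | t ≤ i ∧ i ≤ n}

/-- Backward filtration `σ(X_n, …, X_{t-1})`. -/
def bwdFilt (𝒳 : Type*) [MeasurableSpace 𝒳] (t n : ℕ) : MeasurableSpace (ℕ → 𝒳) :=
  coordSigma 𝒳 {i | n ≤ i ∧ i < t}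

/-- A forward `t`-delay e-process under the class `𝒫₁`: a nonnegative process
`(R n)_{n ≥ t}` adapted to the forward filtration `σ(X_t, …, X_n)` such that for every
`F₁ ∈ 𝒫₁`, every law `Q` under which `X_t, X_{t+1}, …` are i.i.d. `F₁`, and every
stopping time `κ ≥ t` of the forward filtration, `E_Q[R_κ] ≤ 1`. -/
def IsForwardEProcess (𝒫₁ : Set (Measure 𝒳)) (t : ℕ) (R : ℕ → (ℕ → 𝒳) → ℝ≥0∞) : Prop :=
  (∀ n, t ≤ n → Measurable[fwdFilt 𝒳 t n] (R n)) ∧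
    ∀ F₁ ∈ 𝒫₁, ∀ Q : Measure (ℕ → 𝒳), IsIIDOn Q F₁ {i | t ≤ i} →
      ∀ κ : (ℕ → 𝒳) → ℕ, (∀ ω, t ≤ κ ω) →
        (∀ n, MeasurableSet[fwdFilt 𝒳 t n] {ω | κ ω ≤ n}) →
        ∫⁻ ω, R (κ ω) ω ∂Q ≤ 1

/-- A backward `t`-delay e-process under the class `𝒫₀`: a nonnegative process
`(S n)_{1 ≤ n < t}` adapted to the backward filtration `σ(X_n, …, X_{t-1})` such that for
every `F₀ ∈ 𝒫₀`, every law `Q` under which `X₁, …, X_{t-1}` are i.i.d. `F₀`, and every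
stopping time `κ` of the backward filtration with `1 ≤ κ < t`, `E_Q[S_κ] ≤ 1`. -/
def IsBackwardEProcess (𝒫₀ : Set (Measure 𝒳)) (t : ℕ) (S : ℕ → (ℕ → 𝒳) → ℝ≥0∞) : Prop :=
  (∀ n, 1 ≤ n → n < t → Measurable[bwdFilt 𝒳 t n] (S n)) ∧
    ∀ F₀ ∈ 𝒫₀, ∀ Q : Measure (ℕ → 𝒳), IsIIDOn Q F₀ {i | 1 ≤ i ∧ i < t} →
      ∀ κ : (ℕ → 𝒳) → ℕ, (∀ ω, 1 ≤ κ ω ∧ κ ω < t) →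
        (∀ n, MeasurableSet[bwdFilt 𝒳 t n] {ω | n ≤ κ ω}) →
        ∫⁻ ω, S (κ ω) ω ∂Q ≤ 1

/-- The localization statistic `M_t` built from the estimator `T̂`, forward e-processes `R`
and backward e-processes `S`: `M_t = R^{(t)}_{T̂ - 1}` if `t < T̂ ≤ τ < ∞`, `M_t = 1` if
`t = T̂ ≤ τ < ∞`, `M_t = S^{(t)}_{T̂}` if `T̂ < t ≤ τ < ∞`, and `M_t = -∞` if `t > τ` or
`τ = ∞`. -/
noncomputable def eStat (τ : (ℕ → 𝒳) → ℕ∞) (That : (ℕ → 𝒳) → ℕ)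
    (R S : ℕ → ℕ → (ℕ → 𝒳) → ℝ≥0∞) (t : ℕ) (ω : ℕ → 𝒳) : EReal :=
  if (t : ℕ∞) ≤ τ ω ∧ τ ω ≠ ⊤ then
    if t < That ω then ((R t (That ω - 1) ω : ℝ≥0∞) : EReal)
    else if t = That ω then 1
    else ((S t (That ω) ω : ℝ≥0∞) : EReal)
  else ⊥

/-! If `T` is not covered, then either `τ < T`, or `T ≤ τ < ∞` and `M_T ≥ 2/α > 1`. The event
`τ < T` depends only on `X₁, …, X_{T-1}`, so it has the same probability under `P_{F₀,T,F₁}` as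
under `P_{F₀,∞}`, at most `δ`. In the second case `M_T` is a value of the forward e-process
`R^{(T)}` (on `X_T, X_{T+1}, …`, i.i.d. `F₁`) or of the backward e-process `S^{(T)}` (on
`X_{T-1}, …, X₁`, i.i.d. `F₀`), so one of them crosses `2/α`; by Ville's inequality (Markov's
inequality at the crossing time, a stopping time) each does so with probability at most `α/2`.
Hence `P(T ∉ C) ≤ α + δ`, and `P(T ≤ τ, T ∉ C) ≤ α` while `P(T ≤ τ) ≥ 1 - δ`. -/

lemma coordSigma_le (s : Set ℕ) : coordSigma 𝒳 s ≤ (inferInstance : MeasurableSpace (ℕ → 𝒳)) :=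
  iSup₂_le fun i _ => (measurable_pi_apply i).comap_le

lemma coordSigma_mono {s s' : Set ℕ} (h : s ⊆ s') : coordSigma 𝒳 s ≤ coordSigma 𝒳 s' :=
  biSup_mono h

lemma fwdFilt_mono {t m n : ℕ} (h : m ≤ n) : fwdFilt 𝒳 t m ≤ fwdFilt 𝒳 t n :=
  coordSigma_mono fun _ hi => ⟨hi.1, hi.2.trans h⟩

lemma bwdFilt_anti {t m n : ℕ} (h : n ≤ m) : bwdFilt 𝒳 t m ≤ bwdFilt 𝒳 t n :=
  coordSigma_mono fun _ hi => ⟨h.trans hi.1, hi.2⟩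

lemma IsProductLaw.measure_eq_of_measurableSet_coordSigma {P P' : Measure (ℕ → 𝒳)}
    {ν ν' : ℕ → Measure 𝒳} (hP : IsProductLaw P ν) (hP' : IsProductLaw P' ν') {s : Set ℕ}
    (hs : ∀ i ∈ s, 1 ≤ i) (hν : ∀ i ∈ s, ν i = ν' i) {E : Set (ℕ → 𝒳)}
    (hE : MeasurableSet[coordSigma 𝒳 s] E) : P E = P' E := by
  classical
  have := hP.1; have := hP'.1
  refine ext_on_measurableSpace_of_generate_finite _ _ ?_ (coordSigma_le s)
    (generateFrom_piiUnionInter_measurableSet _ s).symm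
    (isPiSystem_piiUnionInter _ (fun i => @MeasurableSpace.isPiSystem_measurableSet _
      (MeasurableSpace.comap (fun ω : ℕ → 𝒳 => ω i) inferInstance)) s)
    (by simp) hE
  rintro _ ⟨t, hts, f, hf, rfl⟩
  choose! B hB hfB using fun i hi => MeasurableSpace.measurableSet_comap.1 (hf i hi)
  let A : ℕ → Set 𝒳 := fun i => if i ∈ t then B i else univ
  have hA : ∀ i, MeasurableSet (A i) := fun i => by
    by_cases hi : i ∈ t <;> simp [A, hi, hB]
  have hcyl : ⋂ i ∈ t, f i = {ω | ∀ i ∈ t, ω i ∈ A i} := by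
    ext ω; simp +contextual [A, ← hfB]
  have ht : ∀ i ∈ t, 1 ≤ i := fun i hi => hs i (hts hi)
  rw [hcyl, hP.2 t ht A hA, hP'.2 t ht A hA]
  exact Finset.prod_congr rfl fun i hi => by rw [hν i (hts hi)]

lemma IsProductLaw.isIIDOn {P : Measure (ℕ → 𝒳)} {ν : ℕ → Measure 𝒳} (hP : IsProductLaw P ν)
    {μ : Measure 𝒳} {I : Set ℕ} (hI : ∀ i ∈ I, 1 ≤ i ∧ ν i = μ) : IsIIDOn P μ I :=
  ⟨hP.1, fun s hs A hA => (hP.2 s (fun i hi => (hI i (hs hi)).1) A hA).trans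
    (Finset.prod_congr rfl fun i hi => by rw [(hI i (hs hi)).2])⟩

lemma IsStoppingTimeSeq.measurableSet_lt {τ : (ℕ → 𝒳) → ℕ∞} (hτ : IsStoppingTimeSeq τ)
    {T : ℕ} (hT : 1 ≤ T) : MeasurableSet[natFilt 𝒳 (T - 1)] {ω | τ ω < T} := by
  convert hτ (T - 1) using 3 with ω
  rw [← ENat.lt_natCast_add_one_iff, ← Nat.cast_add_one, Nat.sub_add_cancel hT]

lemma measure_le_inv_of_le_of_lintegral_le_one {Ω : Type*} [MeasurableSpace Ω] {Q : Measure Ω}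
    {E : Set Ω} (hE : MeasurableSet E) {f : Ω → ℝ≥0∞} {c : ℝ≥0∞} (hcf : ∀ ω ∈ E, c ≤ f ω)
    (hf : ∫⁻ ω, f ω ∂Q ≤ 1) : Q E ≤ c⁻¹ := by
  rw [ENNReal.le_inv_iff_mul_le, mul_comm, ← lintegral_indicator_const hE]
  exact (lintegral_mono (Set.indicator_le hcf)).trans hf

lemma IsForwardEProcess.measure_exists_ge_le_inv {𝒫₁ : Set (Measure 𝒳)} {t : ℕ}
    {R : ℕ → (ℕ → 𝒳) → ℝ≥0∞} (hR : IsForwardEProcess 𝒫₁ t R) {F₁ : Measure 𝒳}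
    (hF₁ : F₁ ∈ 𝒫₁) {Q : Measure (ℕ → 𝒳)} (hQ : IsIIDOn Q F₁ {i | t ≤ i}) (c : ℝ≥0∞) :
    Q {ω | ∃ m, t ≤ m ∧ c ≤ R m ω} ≤ c⁻¹ := by
  let E : ℕ → Set (ℕ → 𝒳) := fun N => {ω | ∃ m ∈ Icc t N, R m ω ∈ Ici c}
  have hE : ∀ N, MeasurableSet[fwdFilt 𝒳 t N] (E N) := fun N => by
    have : E N = ⋃ m ∈ Icc t N, R m ⁻¹' Ici c := by ext; simp [E]
    rw [this]
    refine .biUnion (to_countable _) fun m hm => (hR.1 m hm.1).mono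
      (fwdFilt_mono hm.2) le_rfl measurableSet_Ici
  have hEN : ∀ N, Q (E N) ≤ c⁻¹ := fun N => by
    rcases lt_or_ge N t with hN | hN
    · have : E N = ∅ := eq_empty_of_forall_notMem fun ω ⟨m, hm, _⟩ =>
        absurd (hm.1.trans hm.2) (not_le.2 hN)
      simp [this]
    -- `IsForwardEProcess` only controls ℕ-valued stopping times, hence the truncation at `N`
    let κ := hittingBtwn R (Ici c) t N
    refine measure_le_inv_of_le_of_lintegral_le_one (coordSigma_le _ _ (hE N))
      (fun ω hω => hittingBtwn_mem_set hω) (hR.2 F₁ hF₁ Q hQ κ (le_hittingBtwn hN) fun n => ?_)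
    rcases lt_or_ge n N with hn | hn
    · convert hE n using 1
      ext ω
      exact hittingBtwn_le_iff_of_lt n hn
    · simp [κ, (hittingBtwn_le _).trans hn]
  have hunion : {ω | ∃ m, t ≤ m ∧ c ≤ R m ω} = ⋃ N, E N := by
    ext ω; simp only [E, mem_ofPred_eq, mem_iUnion, mem_Icc, mem_Ici]
    exact ⟨fun ⟨m, htm, hm⟩ => ⟨m, m, ⟨htm, le_rfl⟩, hm⟩, fun ⟨_, m, hm, h⟩ => ⟨m, hm.1, h⟩⟩
  have hmono : Monotone E := fun N N' h ω ⟨m, hm, hcm⟩ => ⟨m, ⟨hm.1, hm.2.trans h⟩, hcm⟩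
  rw [hunion, hmono.measure_iUnion]
  exact iSup_le hEN

lemma _root_.Nat.le_findGreatest_iff {P : ℕ → Prop} [DecidablePred P] {k n : ℕ} (hk : 0 < k) :
    k ≤ Nat.findGreatest P n ↔ ∃ m, k ≤ m ∧ m ≤ n ∧ P m :=
  ⟨fun h => ⟨_, h, Nat.findGreatest_le n, Nat.findGreatest_of_ne_zero rfl (by omega)⟩,
    fun ⟨_, hkm, hmn, hm⟩ => hkm.trans (Nat.le_findGreatest hmn hm)⟩

lemma IsBackwardEProcess.measure_exists_lt_le_inv {𝒫₀ : Set (Measure 𝒳)} {t : ℕ}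
    {S : ℕ → (ℕ → 𝒳) → ℝ≥0∞} (hS : IsBackwardEProcess 𝒫₀ t S) {F₀ : Measure 𝒳}
    (hF₀ : F₀ ∈ 𝒫₀) {Q : Measure (ℕ → 𝒳)} (hQ : IsIIDOn Q F₀ {i | 1 ≤ i ∧ i < t}) (c : ℝ≥0∞) :
    Q {ω | ∃ m, 1 ≤ m ∧ m < t ∧ c ≤ S m ω} ≤ c⁻¹ := by
  classical
  let U : ℕ → Set (ℕ → 𝒳) := fun n => {ω | ∃ m, n ≤ m ∧ m ≤ t - 1 ∧ c ≤ S m ω}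
  have hU : ∀ n, 1 ≤ n → MeasurableSet[bwdFilt 𝒳 t n] (U n) := fun n hn => by
    have : U n = ⋃ m ∈ Icc n (t - 1), S m ⁻¹' Ici c := by ext; simp [U, and_assoc]
    rw [this]
    refine .biUnion (to_countable _) fun m ⟨hnm, hmt⟩ => (hS.1 m (hn.trans hnm) (by omega)).mono
      (bwdFilt_anti hnm) le_rfl measurableSet_Ici
  have hE : {ω | ∃ m, 1 ≤ m ∧ m < t ∧ c ≤ S m ω} = U 1 := by
    ext; simp only [U, mem_ofPred_eq]; grind
  rcases lt_or_ge t 2 with ht | ht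
  · have : U 1 = ∅ := eq_empty_of_forall_notMem fun ω ⟨m, h1m, hmt, _⟩ => by omega
    simp [hE, this]
  -- the last time before `t` at which `S` reaches `c` (or `1` if there is none)
  let κ ω := max 1 (Nat.findGreatest (fun m => c ≤ S m ω) (t - 1))
  have hκ : ∀ ω, 1 ≤ κ ω ∧ κ ω < t := fun ω =>
    ⟨le_max_left _ _, max_lt (by omega) ((Nat.findGreatest_le _).trans_lt (by omega))⟩
  have hlevel : ∀ n, 2 ≤ n → {ω | n ≤ κ ω} = U n := fun n hn => by
    ext ω
    simp only [κ, mem_ofPred_eq, le_max_iff, U, ← Nat.le_findGreatest_iff (by omega : 0 < n)]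
    omega
  refine hE ▸ measure_le_inv_of_le_of_lintegral_le_one (coordSigma_le _ _ (hU 1 le_rfl))
    (fun ω ⟨m, h1m, hmt, hm⟩ => ?_) (hS.2 F₀ hF₀ Q hQ κ hκ fun n => ?_)
  · have hmκ : m ≤ Nat.findGreatest (fun m => c ≤ S m ω) (t - 1) := Nat.le_findGreatest hmt hm
    rw [show κ ω = _ from max_eq_right (h1m.trans hmκ)]
    exact Nat.findGreatest_spec (P := fun m => c ≤ S m ω) hmt hm
  rcases le_or_gt n 1 with hn | hn
  · simp [show ∀ ω, n ≤ κ ω from fun ω => hn.trans (hκ ω).1]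
  · exact hlevel n hn ▸ hU n hn.le

lemma exists_le_of_le_eStat {𝒳 : Type*} {τ : (ℕ → 𝒳) → ℕ∞} {That : (ℕ → 𝒳) → ℕ}
    {R S : ℕ → ℕ → (ℕ → 𝒳) → ℝ≥0∞} {t : ℕ} {ω : ℕ → 𝒳} (hThat : τ ω ≠ ⊤ → 1 ≤ That ω)
    {b : ℝ} (hb : 1 < b) (h : (b : EReal) ≤ eStat τ That R S t ω) :
    (∃ m, t ≤ m ∧ ENNReal.ofReal b ≤ R t m ω) ∨
      (∃ m, 1 ≤ m ∧ m < t ∧ ENNReal.ofReal b ≤ S t m ω) := by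
  have hb' : (b : EReal) = (ENNReal.ofReal b : EReal) := by
    rw [EReal.coe_ennreal_ofReal, max_eq_left (by linarith)]
  rw [eStat] at h
  split_ifs at h with hτ hlt heq
  · rw [hb', EReal.coe_ennreal_le_coe_ennreal_iff] at h
    exact .inl ⟨That ω - 1, by omega, h⟩
  · exact absurd h (not_le.2 (mod_cast hb))
  · rw [hb', EReal.coe_ennreal_le_coe_ennreal_iff] at h
    exact .inr ⟨That ω, hThat hτ.2, by omega, h⟩
  · exact absurd h (by simp)

lemma IsChangeLaw.measure_lt_eq {P Pinf : Measure (ℕ → 𝒳)} {F₀ F₁ : Measure 𝒳} {T : ℕ}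
    (hP : IsChangeLaw P F₀ F₁ T) (hPinf : IsNoChangeLaw Pinf F₀) {τ : (ℕ → 𝒳) → ℕ∞}
    (hτ : IsStoppingTimeSeq τ) (hT : 1 ≤ T) : P {ω | τ ω < T} = Pinf {ω | τ ω < T} :=
  hP.measure_eq_of_measurableSet_coordSigma hPinf (fun _ hi => hi.1)
    (fun _ hi => if_pos (by simp only [mem_ofPred_eq] at hi; omega)) (hτ.measurableSet_lt hT)

lemma IsChangeLaw.measure_crossing_le {P : Measure (ℕ → 𝒳)} {F₀ F₁ : Measure 𝒳} {T : ℕ}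
    (hP : IsChangeLaw P F₀ F₁ T) (hT : 1 ≤ T) {𝒫₀ 𝒫₁ : Set (Measure 𝒳)} (hF₀ : F₀ ∈ 𝒫₀)
    (hF₁ : F₁ ∈ 𝒫₁) {R S : ℕ → (ℕ → 𝒳) → ℝ≥0∞} (hR : IsForwardEProcess 𝒫₁ T R)
    (hS : IsBackwardEProcess 𝒫₀ T S) (c : ℝ≥0∞) :
    P ({ω | ∃ m, T ≤ m ∧ c ≤ R m ω} ∪ {ω | ∃ m, 1 ≤ m ∧ m < T ∧ c ≤ S m ω}) ≤ 2 * c⁻¹ :=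
  calc _ ≤ c⁻¹ + c⁻¹ := (measure_union_le _ _).trans (add_le_add
        (hR.measure_exists_ge_le_inv hF₁
          (hP.isIIDOn fun _ hi => ⟨hT.trans hi, if_neg (not_lt.2 hi)⟩) c)
        (hS.measure_exists_lt_le_inv hF₀ (hP.isIIDOn fun _ hi => ⟨hi.1, if_pos hi.2⟩) c))
    _ = 2 * c⁻¹ := (two_mul _).symm

lemma ofReal_one_sub_le_measure {Ω : Type*} [MeasurableSpace Ω] {P : Measure Ω}
    [IsProbabilityMeasure P] {G B : Set Ω} (hGB : Gᶜ ⊆ B) {ε : ℝ} (hε : 0 ≤ ε)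
    (hB : P B ≤ ENNReal.ofReal ε) : ENNReal.ofReal (1 - ε) ≤ P G := by
  rw [ENNReal.ofReal_sub _ hε, ENNReal.ofReal_one, tsub_le_iff_right]
  calc 1 = P (G ∪ Gᶜ) := by rw [union_compl_self, measure_univ]
    _ ≤ P G + P Gᶜ := measure_union_le _ _
    _ ≤ P G + ENNReal.ofReal ε := by gcongr; exact (measure_mono hGB).trans hB

lemma ofReal_one_sub_div_le_cond {Ω : Type*} [MeasurableSpace Ω] {P : Measure Ω}
    [IsFiniteMeasure P] {A G B : Set Ω} (hA : MeasurableSet A) (hGA : G ⊆ A) (hAGB : A ⊆ G ∪ B)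
    {ε r : ℝ} (hε : 0 ≤ ε) (hr : 0 < r) (hB : P B ≤ ENNReal.ofReal ε)
    (hPA : ENNReal.ofReal r ≤ P A) : ENNReal.ofReal (1 - ε / r) ≤ P[G|A] := by
  have hA0 : P A ≠ 0 := ((ENNReal.ofReal_pos.2 hr).trans_le hPA).ne'
  rw [cond_apply hA, inter_eq_self_of_subset_right hGA, ENNReal.ofReal_le_iff_le_toReal
    (ENNReal.mul_ne_top (ENNReal.inv_ne_top.2 hA0) (measure_ne_top _ _)),
    ENNReal.toReal_mul, ENNReal.toReal_inv, inv_mul_eq_div]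
  have ha : r ≤ (P A).toReal := (ENNReal.ofReal_le_iff_le_toReal (measure_ne_top _ _)).1 hPA
  have hag : (P A).toReal ≤ (P G).toReal + ε := by
    have := (measure_mono hAGB).trans ((measure_union_le G B).trans (add_le_add_right hB _))
    rwa [← ENNReal.toReal_le_toReal (measure_ne_top _ _) (by finiteness), ENNReal.toReal_add
      (measure_ne_top _ _) ENNReal.ofReal_ne_top, ENNReal.toReal_ofReal hε] at this
  rw [le_div_iff₀ (hr.trans_le ha)]
  have : ε ≤ ε / r * (P A).toReal := by
    rw [div_mul_eq_mul_div, le_div_iff₀ hr]; exact mul_le_mul_of_nonneg_left ha hε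
  calc (1 - ε / r) * (P A).toReal = (P A).toReal - ε / r * (P A).toReal := by ring
    _ ≤ (P G).toReal := by linarith

theorem pfa_coverage_general
    {𝒳 : Type*} [MeasurableSpace 𝒳]
    (𝒫₀ 𝒫₁ : Set (Measure 𝒳))
    (τ : (ℕ → 𝒳) → ℕ∞) (hτ : IsStoppingTimeSeq τ)
    (That : (ℕ → 𝒳) → ℕ)
    (hThat : ∀ ω, τ ω ≠ ⊤ → 1 ≤ That ω ∧ (That ω : ℕ∞) ≤ τ ω)
    (R S : ℕ → ℕ → (ℕ → 𝒳) → ℝ≥0∞)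
    (hR : ∀ t : ℕ, 1 ≤ t → IsForwardEProcess 𝒫₁ t (R t))
    (hS : ∀ t : ℕ, 1 ≤ t → IsBackwardEProcess 𝒫₀ t (S t))
    (α δ : ℝ) (hα : α ∈ Set.Ioo (0 : ℝ) 1) (hδ : δ ∈ Set.Ioo (0 : ℝ) 1)
    (hPFA : ∀ F₀ ∈ 𝒫₀, ∀ Pinf : Measure (ℕ → 𝒳), IsNoChangeLaw Pinf F₀ →
      Pinf {ω | τ ω ≠ ⊤} ≤ ENNReal.ofReal δ) :
    ∀ F₀ ∈ 𝒫₀, ∀ F₁ ∈ 𝒫₁, ∀ T : ℕ, 1 ≤ T →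
      ∀ P Pinf : Measure (ℕ → 𝒳), IsChangeLaw P F₀ F₁ T → IsNoChangeLaw Pinf F₀ →
      (ENNReal.ofReal (1 - α - δ) ≤
        P {ω | T ∈ {t : ℕ | 1 ≤ t ∧ (t : ℕ∞) ≤ τ ω ∧
          eStat τ That R S t ω < ((2 / α : ℝ) : EReal)}}) ∧
      (Pinf {ω | (T : ℕ∞) ≤ τ ω} ≠ 0 →
        ENNReal.ofReal (1 - α / (1 - δ)) ≤
          ProbabilityTheory.cond P {ω | (T : ℕ∞) ≤ τ ω}
            {ω | T ∈ {t : ℕ | 1 ≤ t ∧ (t : ℕ∞) ≤ τ ω ∧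
              eStat τ That R S t ω < ((2 / α : ℝ) : EReal)}}) := by
  intro F₀ hF₀ F₁ hF₁ T hT P Pinf hP hPinf
  have := hP.1
  obtain ⟨hα0, hα1⟩ := hα
  obtain ⟨hδ0, hδ1⟩ := hδ
  set G := {ω | T ∈ {t : ℕ | 1 ≤ t ∧ (t : ℕ∞) ≤ τ ω ∧
    eStat τ That R S t ω < ((2 / α : ℝ) : EReal)}}
  set A := {ω | (T : ℕ∞) ≤ τ ω}
  set B := {ω | ∃ m, T ≤ m ∧ ENNReal.ofReal (2 / α) ≤ R T m ω} ∪
    {ω | ∃ m, 1 ≤ m ∧ m < T ∧ ENNReal.ofReal (2 / α) ≤ S T m ω}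
  have hB : P B ≤ ENNReal.ofReal α := by
    refine (hP.measure_crossing_le hT hF₀ hF₁ (hR T hT) (hS T hT) _).trans_eq ?_
    rw [← ENNReal.ofReal_inv_of_pos (by positivity), inv_div, ← ENNReal.ofReal_ofNat 2,
      ← ENNReal.ofReal_mul zero_le_two, mul_div_cancel₀ _ two_ne_zero]
  have hAc : Aᶜ = {ω | τ ω < T} := by ext; simp [A]
  have hPAc : P Aᶜ ≤ ENNReal.ofReal δ := by
    rw [hAc, hP.measure_lt_eq hPinf hτ hT]
    exact (measure_mono fun ω h => h.ne_top).trans (hPFA F₀ hF₀ Pinf hPinf)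
  have hAGB : A ⊆ G ∪ B := fun ω hωA => or_iff_not_imp_left.2 fun hωG =>
    exists_le_of_le_eStat (fun h => (hThat ω h).1) ((one_lt_div hα0).2 (by linarith))
      (not_lt.1 fun h => hωG ⟨hT, hωA, h⟩)
  refine ⟨?_, fun _ => ?_⟩
  · have hGc : Gᶜ ⊆ B ∪ Aᶜ := fun ω hωG => (em (ω ∈ A)).imp
      (fun hωA => (hAGB hωA).resolve_left hωG) id
    rw [sub_sub]
    refine ofReal_one_sub_le_measure hGc (by positivity) ((measure_union_le _ _).trans ?_)
    rw [ENNReal.ofReal_add hα0.le hδ0.le]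
    exact add_le_add hB hPAc
  · have hA : MeasurableSet A := (hAc ▸ coordSigma_le _ _ (hτ.measurableSet_lt hT)).of_compl
    exact ofReal_one_sub_div_le_cond hA (fun ω h => h.2.1) hAGB hα0.le (by linarith) hB
      (ofReal_one_sub_le_measure subset_rfl hδ0.le hPAc)

/-- Coverage under a bounded probability of false alarm: with
`C := {t ≤ τ : M_t < 2/α}` and a detection procedure with `P_{F₀,∞}(τ < ∞) ≤ δ` for
every `F₀ ∈ 𝒫₀`, one has `P_{F₀,T,F₁}(T ∈ C) ≥ 1 − α − δ`; moreover, if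
`P_{F₀,∞}(τ ≥ T) > 0`, then `P_{F₀,T,F₁}(T ∈ C | τ ≥ T) ≥ 1 − α/(1 − δ)`. -/
theorem pfa_coverage
    {𝒳 : Type*} [MeasurableSpace 𝒳]
    (𝒫₀ 𝒫₁ : Set (Measure 𝒳)) (hdisj : Disjoint 𝒫₀ 𝒫₁)
    (τ : (ℕ → 𝒳) → ℕ∞) (hτ : IsStoppingTimeSeq τ)
    (That : (ℕ → 𝒳) → ℕ)
    (hThat : ∀ ω, τ ω ≠ ⊤ → 1 ≤ That ω ∧ (That ω : ℕ∞) ≤ τ ω)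
    (R S : ℕ → ℕ → (ℕ → 𝒳) → ℝ≥0∞)
    (hR : ∀ t : ℕ, 1 ≤ t → IsForwardEProcess 𝒫₁ t (R t))
    (hS : ∀ t : ℕ, 1 ≤ t → IsBackwardEProcess 𝒫₀ t (S t))
    (α δ : ℝ) (hα : α ∈ Set.Ioo (0 : ℝ) 1) (hδ : δ ∈ Set.Ioo (0 : ℝ) 1)
    (hPFA : ∀ F₀ ∈ 𝒫₀, ∀ Pinf : Measure (ℕ → 𝒳), IsNoChangeLaw Pinf F₀ →
      Pinf {ω | τ ω ≠ ⊤} ≤ ENNReal.ofReal δ) :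
    ∀ F₀ ∈ 𝒫₀, ∀ F₁ ∈ 𝒫₁, ∀ T : ℕ, 1 ≤ T →
      ∀ P Pinf : Measure (ℕ → 𝒳), IsChangeLaw P F₀ F₁ T → IsNoChangeLaw Pinf F₀ →
      (ENNReal.ofReal (1 - α - δ) ≤
        P {ω | T ∈ {t : ℕ | 1 ≤ t ∧ (t : ℕ∞) ≤ τ ω ∧
          eStat τ That R S t ω < ((2 / α : ℝ) : EReal)}}) ∧
      (Pinf {ω | (T : ℕ∞) ≤ τ ω} ≠ 0 →
        ENNReal.ofReal (1 - α / (1 - δ)) ≤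
          ProbabilityTheory.cond P {ω | (T : ℕ∞) ≤ τ ω}
            {ω | T ∈ {t : ℕ | 1 ≤ t ∧ (t : ℕ∞) ≤ τ ω ∧
              eStat τ That R S t ω < ((2 / α : ℝ) : EReal)}}) :=
  pfa_coverage_general 𝒫₀ 𝒫₁ τ hτ That hThat R S hR hS α δ hα hδ hPFA

end SeqChange
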